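/- arXiv:1406.1320 — 2 statements merged into one kernel-verified Lean document; each statement's English description precedes it below -/
import Mathlib

section
/- For every complex number z with Re z > 0 and every integer N ≥ 1, the series Σ_{k=1}^∞ (1/(2πk)) · ∫_0^∞ u^{2N−2}·e^{−2πku}/(u² + z²) du converges absolutely and ∫_0^∞ (1/(e^{2πt} − 1)) · (∫_0^t u^{2N−2}/(u² + z²) du) dt = Σ_{k=1}^∞ (1/(2πk)) · ∫_0^∞ u^{2N−2}·e^{−2πku}/(u² + z²) du. -/
/-!
Expanding `1 / (e^{ct} - 1) = ∑_{k ≥ 1} e^{-kct}` reduces the remainder to the Laplace transforms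
`∫₀^∞ e^{-bt} F(t) dt` of the primitive `F(t) = ∫₀^t f`, and integration by parts turns each of
them into `b⁻¹ ∫₀^∞ e^{-bu} f(u) du`. The integrand `f(u) = u^m / (u² + z²)` grows at most like
`u^m / (Re z)²`, so `‖F(t)‖ ≤ C t^{m+1}` and the `k`-th term is `O(k^{-(m+2)})`; this summable
bound justifies exchanging the sum with the integral.
-/

open MeasureTheory Set Real Filter Topology
open scoped Nat

lemma integral_pow_mul_exp_neg_mul_Ioi (n : ℕ) {b : ℝ} (hb : 0 < b) :
    ∫ t in Ioi (0 : ℝ), t ^ n * exp (-(b * t)) = n ! / b ^ (n + 1) := by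
  have h := integral_rpow_mul_exp_neg_mul_Ioi (a := n + 1) (by positivity) hb
  simp only [add_sub_cancel_right, rpow_natCast] at h
  rw [h, Gamma_nat_eq_factorial, ← Nat.cast_add_one, rpow_natCast, one_div, inv_pow]
  ring

lemma integrableOn_pow_mul_exp_neg_mul (n : ℕ) {b : ℝ} (hb : 0 < b) :
    IntegrableOn (fun t : ℝ => t ^ n * exp (-(b * t))) (Ioi 0) := by
  simpa [rpow_natCast, neg_mul] using integrableOn_rpow_mul_exp_neg_mul_rpow (s := n) (p := 1)
    (by linarith [n.cast_nonneg (α := ℝ)]) one_pos hb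

lemma tendsto_pow_mul_exp_neg_mul_atTop_nhds_zero (n : ℕ) {b : ℝ} (hb : 0 < b) :
    Tendsto (fun t : ℝ => t ^ n * exp (-(b * t))) atTop (𝓝 0) := by
  simpa [rpow_natCast, neg_mul] using tendsto_rpow_mul_exp_neg_mul_atTop_nhds_zero n b hb

lemma hasSum_exp_neg_mul_succ {x : ℝ} (hx : 0 < x) :
    HasSum (fun k : ℕ => exp (-(x * (k + 1)))) (1 / (exp x - 1)) := by
  have hr : exp (-x) < 1 := exp_lt_one_iff.mpr (neg_lt_zero.mpr hx)
  have hterms : (fun k : ℕ => exp (-(x * (k + 1)))) = fun k => exp (-x) ^ k * exp (-x) := by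
    funext k
    rw [← exp_nat_mul, ← exp_add]
    ring_nf
  have hsum : 1 / (exp x - 1) = (1 - exp (-x))⁻¹ * exp (-x) := by
    have : exp x - 1 ≠ 0 := (sub_pos.mpr (one_lt_exp_iff.mpr hx)).ne'
    rw [exp_neg]
    field_simp
  rw [hterms, hsum]
  exact (hasSum_geometric_of_lt_one (exp_pos _).le hr).mul_right _

section PolynomialGrowth

variable {E : Type*} [NormedAddCommGroup E] [NormedSpace ℝ E] {g : ℝ → E} {C b : ℝ} {n : ℕ}

lemma norm_exp_neg_mul_smul_le (hg : ∀ t, 0 ≤ t → ‖g t‖ ≤ C * t ^ n) {t : ℝ} (ht : 0 ≤ t) :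
    ‖exp (-(b * t)) • g t‖ ≤ C * (t ^ n * exp (-(b * t))) := by
  calc ‖exp (-(b * t)) • g t‖ = exp (-(b * t)) * ‖g t‖ := by
        rw [norm_smul, norm_of_nonneg (exp_pos _).le]
    _ ≤ exp (-(b * t)) * (C * t ^ n) := mul_le_mul_of_nonneg_left (hg t ht) (exp_pos _).le
    _ = C * (t ^ n * exp (-(b * t))) := by ring

lemma integrableOn_exp_neg_mul_smul (hgc : Continuous g)
    (hg : ∀ t, 0 ≤ t → ‖g t‖ ≤ C * t ^ n) (hb : 0 < b) :
    IntegrableOn (fun t => exp (-(b * t)) • g t) (Ioi 0) := by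
  refine ((integrableOn_pow_mul_exp_neg_mul n hb).const_mul C).mono' ?_ ?_
  · exact (by fun_prop : Continuous fun t => exp (-(b * t)) • g t).aestronglyMeasurable
  · filter_upwards [ae_restrict_mem measurableSet_Ioi] with t ht
    exact norm_exp_neg_mul_smul_le hg (le_of_lt ht)

lemma integral_norm_exp_neg_mul_smul_le (hgc : Continuous g)
    (hg : ∀ t, 0 ≤ t → ‖g t‖ ≤ C * t ^ n) (hb : 0 < b) :
    ∫ t in Ioi 0, ‖exp (-(b * t)) • g t‖ ≤ C * n ! / b ^ (n + 1) := by
  calc ∫ t in Ioi 0, ‖exp (-(b * t)) • g t‖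
      ≤ ∫ t in Ioi 0, C * (t ^ n * exp (-(b * t))) :=
        setIntegral_mono_on (integrableOn_exp_neg_mul_smul hgc hg hb).norm
          ((integrableOn_pow_mul_exp_neg_mul n hb).const_mul C) measurableSet_Ioi
          fun t ht => norm_exp_neg_mul_smul_le hg (le_of_lt ht)
    _ = C * n ! / b ^ (n + 1) := by
        rw [integral_const_mul, integral_pow_mul_exp_neg_mul_Ioi n hb, mul_div_assoc]

lemma tendsto_exp_neg_mul_smul_atTop (hg : ∀ t, 0 ≤ t → ‖g t‖ ≤ C * t ^ n) (hb : 0 < b) :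
    Tendsto (fun t => exp (-(b * t)) • g t) atTop (𝓝 0) := by
  refine squeeze_zero_norm' ?_
    (by simpa using (tendsto_pow_mul_exp_neg_mul_atTop_nhds_zero n hb).const_mul C)
  filter_upwards [eventually_ge_atTop 0] with t ht
  exact norm_exp_neg_mul_smul_le hg ht

lemma summable_integral_norm_exp_neg_mul_succ_smul (hgc : Continuous g)
    (hg : ∀ t, 0 ≤ t → ‖g t‖ ≤ C * t ^ n) (hn : 1 ≤ n) {c : ℝ} (hc : 0 < c) :
    Summable fun k : ℕ => ∫ t in Ioi 0, ‖exp (-(c * (k + 1) * t)) • g t‖ := by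
  have hck (k : ℕ) : 0 < c * (k + 1) := by positivity
  have hp : Summable fun k : ℕ => C * n ! / c ^ (n + 1) * ((k + 1 : ℕ) ^ (n + 1) : ℝ)⁻¹ :=
    ((summable_nat_add_iff 1).mpr (Real.summable_nat_pow_inv.mpr (by omega))).mul_left _
  refine hp.of_nonneg_of_le (fun k => integral_nonneg fun t => norm_nonneg _) fun k => ?_
  refine (integral_norm_exp_neg_mul_smul_le hgc hg (hck k)).trans_eq ?_
  push_cast
  rw [mul_pow]
  field_simp

end PolynomialGrowth

section Antiderivative

variable {E : Type*} [NormedAddCommGroup E] [NormedSpace ℝ E] {f : ℝ → E} {C : ℝ} {m : ℕ}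

lemma norm_primitive_le_of_norm_le_mul_pow (hfC : ∀ u, 0 ≤ u → ‖f u‖ ≤ C * u ^ m)
    {t : ℝ} (ht : 0 ≤ t) : ‖∫ u in (0 : ℝ)..t, f u‖ ≤ C / (m + 1) * t ^ (m + 1) := by
  calc ‖∫ u in (0 : ℝ)..t, f u‖ ≤ ∫ u in (0 : ℝ)..t, C * u ^ m :=
        intervalIntegral.norm_integral_le_of_norm_le ht
          (Eventually.of_forall fun u hu => hfC u hu.1.le)
          ((by fun_prop : Continuous fun u : ℝ => C * u ^ m).intervalIntegrable _ _)
    _ = C / (m + 1) * t ^ (m + 1) := by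
        rw [intervalIntegral.integral_const_mul, integral_pow]
        ring

lemma integrableOn_exp_neg_mul_smul_intervalIntegral (hf : Continuous f)
    (hfC : ∀ u, 0 ≤ u → ‖f u‖ ≤ C * u ^ m) {b : ℝ} (hb : 0 < b) :
    IntegrableOn (fun t => exp (-(b * t)) • ∫ u in (0 : ℝ)..t, f u) (Ioi 0) :=
  integrableOn_exp_neg_mul_smul (intervalIntegral.continuous_primitive hf.intervalIntegrable 0)
    (fun _ ht => norm_primitive_le_of_norm_le_mul_pow hfC ht) hb

variable [CompleteSpace E]

theorem integral_exp_neg_mul_smul_intervalIntegral (hf : Continuous f)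
    (hfC : ∀ u, 0 ≤ u → ‖f u‖ ≤ C * u ^ m) {b : ℝ} (hb : 0 < b) :
    ∫ t in Ioi 0, exp (-(b * t)) • ∫ u in (0 : ℝ)..t, f u
      = b⁻¹ • ∫ u in Ioi 0, exp (-(b * u)) • f u := by
  set F : ℝ → E := fun t => ∫ u in (0 : ℝ)..t, f u
  have hF : ∀ t, HasDerivAt F (f t) t := fun t =>
    intervalIntegral.integral_hasDerivAt_right (hf.intervalIntegrable _ _)
      (hf.stronglyMeasurableAtFilter _ _) hf.continuousAt
  have hFC : ∀ t, 0 ≤ t → ‖F t‖ ≤ C / (m + 1) * t ^ (m + 1) :=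
    fun t ht => norm_primitive_le_of_norm_le_mul_pow hfC ht
  have hexp : ∀ t, HasDerivAt (fun s => exp (-(b * s))) (-b * exp (-(b * t))) t := fun t => by
    simpa [mul_comm] using ((hasDerivAt_id t).const_mul b).neg.exp
  have hint : IntegrableOn (fun t => (-b * exp (-(b * t))) • F t) (Ioi 0) := by
    have h : IntegrableOn (fun t => (-b) • exp (-(b * t)) • F t) (Ioi 0) :=
      (integrableOn_exp_neg_mul_smul_intervalIntegral hf hfC hb).smul (-b)
    simpa only [smul_smul] using h
  have hf' := integrableOn_exp_neg_mul_smul hf hfC hb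
  have hibp :
      (∫ t in Ioi 0, exp (-(b * t)) • f t) + ∫ t in Ioi 0, (-b * exp (-(b * t))) • F t = 0 := by
    -- `t ↦ e^{-bt} • F t` vanishes at `0` and at `∞`
    rw [← integral_add hf' hint, integral_Ioi_of_hasDerivAt_of_tendsto'
      (fun t _ => (hexp t).smul (hF t)) (hf'.add hint) (tendsto_exp_neg_mul_smul_atTop hFC hb)]
    simp [F]
  simp only [mul_smul, neg_smul, integral_neg, integral_smul, add_neg_eq_zero] at hibp
  rw [hibp, smul_smul, inv_mul_cancel₀ hb.ne', one_smul]

theorem integral_one_div_exp_sub_one_smul_intervalIntegral_eq_tsum (hf : Continuous f)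
    (hfC : ∀ u, 0 ≤ u → ‖f u‖ ≤ C * u ^ m) {c : ℝ} (hc : 0 < c) :
    Summable (fun k : ℕ =>
        ‖(1 / (c * (k + 1))) • ∫ u in Ioi 0, exp (-(c * (k + 1) * u)) • f u‖) ∧
      ∫ t in Ioi 0, (1 / (exp (c * t) - 1)) • ∫ u in (0 : ℝ)..t, f u
        = ∑' k : ℕ, (1 / (c * (k + 1))) • ∫ u in Ioi 0, exp (-(c * (k + 1) * u)) • f u := by
  have hterm (k : ℕ) : (1 / (c * (k + 1))) • ∫ u in Ioi 0, exp (-(c * (k + 1) * u)) • f u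
      = ∫ t in Ioi 0, exp (-(c * (k + 1) * t)) • ∫ u in (0 : ℝ)..t, f u := by
    rw [integral_exp_neg_mul_smul_intervalIntegral hf hfC (by positivity), one_div]
  have hsum := summable_integral_norm_exp_neg_mul_succ_smul
    (intervalIntegral.continuous_primitive hf.intervalIntegrable 0)
    (fun _ ht => norm_primitive_le_of_norm_le_mul_pow hfC ht) (Nat.le_add_left 1 m) hc
  refine ⟨hsum.of_nonneg_of_le (fun _ => norm_nonneg _) fun k => ?_, ?_⟩
  · rw [hterm]
    exact norm_integral_le_integral_norm _
  rw [tsum_congr hterm, integral_tsum_of_summable_integral_norm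
    (fun k => integrableOn_exp_neg_mul_smul_intervalIntegral hf hfC (by positivity)) hsum]
  refine setIntegral_congr_fun measurableSet_Ioi fun t ht => ?_
  have h := (hasSum_exp_neg_mul_succ (mul_pos hc ht)).smul_const (∫ u in (0 : ℝ)..t, f u)
  simp only [mul_right_comm c t] at h
  exact h.tsum_eq.symm

end Antiderivative

lemma sq_re_le_norm_ofReal_sq_add_sq (z : ℂ) (u : ℝ) : z.re ^ 2 ≤ ‖(u : ℂ) ^ 2 + z ^ 2‖ := by
  have hfac : (u : ℂ) ^ 2 + z ^ 2 = (z + u * Complex.I) * (z - u * Complex.I) := by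
    ring_nf; rw [Complex.I_sq]; ring
  rw [hfac, norm_mul, sq, ← abs_mul_abs_self]
  exact mul_le_mul (by simpa using Complex.abs_re_le_norm (z + u * Complex.I))
    (by simpa using Complex.abs_re_le_norm (z - u * Complex.I)) (abs_nonneg _) (norm_nonneg _)

lemma ofReal_sq_add_sq_ne_zero {z : ℂ} (hz : z.re ≠ 0) (u : ℝ) : (u : ℂ) ^ 2 + z ^ 2 ≠ 0 :=
  norm_pos_iff.mp <| (pow_pos (abs_pos.mpr hz) 2).trans_le <| by
    simpa using sq_re_le_norm_ofReal_sq_add_sq z u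

lemma norm_ofReal_pow_div_sq_add_sq_le {z : ℂ} (hz : z.re ≠ 0) (m : ℕ) {u : ℝ} (hu : 0 ≤ u) :
    ‖(u : ℂ) ^ m / ((u : ℂ) ^ 2 + z ^ 2)‖ ≤ (z.re ^ 2)⁻¹ * u ^ m := by
  rw [norm_div, norm_pow, Complex.norm_real, norm_of_nonneg hu, div_eq_inv_mul]
  have hre : 0 < z.re ^ 2 := pow_pos (abs_pos.mpr hz) 2 |>.trans_eq (sq_abs _)
  exact mul_le_mul_of_nonneg_right (inv_anti₀ hre (sq_re_le_norm_ofReal_sq_add_sq z u))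
    (by positivity)

theorem remainder_double_integral_eq_tsum_general (z : ℂ) (hz : 0 < z.re) (N : ℕ) :
    Summable (fun k : ℕ =>
      ‖(1 / (2 * Real.pi * ((k : ℂ) + 1))) *
        ∫ u in Set.Ioi (0 : ℝ),
          ((u : ℂ)) ^ (2 * N - 2) * ((Real.exp (-(2 * Real.pi * ((k : ℝ) + 1) * u)) : ℝ) : ℂ) /
            ((u : ℂ) ^ 2 + z ^ 2)‖) ∧
    (∫ t in Set.Ioi (0 : ℝ),
        ((1 / (Real.exp (2 * Real.pi * t) - 1) : ℝ) : ℂ) *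
          ∫ u in (0 : ℝ)..t, ((u : ℂ)) ^ (2 * N - 2) / ((u : ℂ) ^ 2 + z ^ 2)) =
      ∑' k : ℕ,
        (1 / (2 * Real.pi * ((k : ℂ) + 1))) *
          ∫ u in Set.Ioi (0 : ℝ),
            ((u : ℂ)) ^ (2 * N - 2) * ((Real.exp (-(2 * Real.pi * ((k : ℝ) + 1) * u)) : ℝ) : ℂ) /
              ((u : ℂ) ^ 2 + z ^ 2) := by
  have hcont : Continuous fun u : ℝ => (u : ℂ) ^ (2 * N - 2) / ((u : ℂ) ^ 2 + z ^ 2) :=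
    (by fun_prop : Continuous fun u : ℝ => (u : ℂ) ^ (2 * N - 2)).div (by fun_prop)
      (ofReal_sq_add_sq_ne_zero hz.ne')
  obtain ⟨hsum, heq⟩ := integral_one_div_exp_sub_one_smul_intervalIntegral_eq_tsum hcont
    (fun _ hu => norm_ofReal_pow_div_sq_add_sq_le hz.ne' _ hu) two_pi_pos
  have hterm (k : ℕ) : (1 / (2 * π * ((k : ℂ) + 1))) * ∫ u in Ioi (0 : ℝ),
        (u : ℂ) ^ (2 * N - 2) * ((exp (-(2 * π * ((k : ℝ) + 1) * u)) : ℝ) : ℂ) /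
          ((u : ℂ) ^ 2 + z ^ 2)
      = (1 / (2 * π * ((k : ℝ) + 1))) • ∫ u in Ioi (0 : ℝ),
        exp (-(2 * π * ((k : ℝ) + 1) * u)) • ((u : ℂ) ^ (2 * N - 2) / ((u : ℂ) ^ 2 + z ^ 2)) := by
    rw [Complex.real_smul]
    push_cast
    congr 1
    refine setIntegral_congr_fun measurableSet_Ioi fun u _ => ?_
    rw [Complex.real_smul]
    push_cast
    ring
  refine ⟨hsum.congr fun k => by rw [hterm], ?_⟩
  rw [tsum_congr hterm]
  simpa only [Complex.real_smul] using heq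

/-- Expanding `1/(e^(2πt) - 1)` as `∑_{k≥1} e^(-2πkt)` and interchanging summation and
integration: the double-integral remainder equals an absolutely convergent sum of
Laplace-type integrals. -/
theorem remainder_double_integral_eq_tsum (z : ℂ) (hz : 0 < z.re) (N : ℕ) (hN : 1 ≤ N) :
    Summable (fun k : ℕ =>
      ‖(1 / (2 * Real.pi * ((k : ℂ) + 1))) *
        ∫ u in Set.Ioi (0 : ℝ),
          ((u : ℂ)) ^ (2 * N - 2) * ((Real.exp (-(2 * Real.pi * ((k : ℝ) + 1) * u)) : ℝ) : ℂ) /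
            ((u : ℂ) ^ 2 + z ^ 2)‖) ∧
    (∫ t in Set.Ioi (0 : ℝ),
        ((1 / (Real.exp (2 * Real.pi * t) - 1) : ℝ) : ℂ) *
          ∫ u in (0 : ℝ)..t, ((u : ℂ)) ^ (2 * N - 2) / ((u : ℂ) ^ 2 + z ^ 2)) =
      ∑' k : ℕ,
        (1 / (2 * Real.pi * ((k : ℂ) + 1))) *
          ∫ u in Set.Ioi (0 : ℝ),
            ((u : ℂ)) ^ (2 * N - 2) * ((Real.exp (-(2 * Real.pi * ((k : ℝ) + 1) * u)) : ℝ) : ℂ) /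
              ((u : ℂ) ^ 2 + z ^ 2) :=
  remainder_double_integral_eq_tsum_general z hz N
end

section
/- Let L : ℂ → ℂ be holomorphic on ℂ minus the closed negative real axis (−∞, 0], satisfy exp(L(z)) = Γ(z) on that domain, and satisfy L(x) = log(Γ(x)) for all real x > 0. Then for every complex z with Im z > 0 (so that 0 < arg z < π), [L(z) − (z − 1/2)·Log z + z − (1/2)·log(2π)] + [L(−z) + (z + 1/2)·(Log z − iπ) − z − (1/2)·log(2π)] = −Log(1 − e^{2πiz}), where Log denotes the principal branch of the complex logarithm. -/
/-!
Let `Φ(w)` be the left-hand side and `Ψ(w) = -log (1 - e^{2πiw})`. The reflection formula, in the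
form `Γ(w) Γ(-w) w (1 - e^{2πiw}) = 2πi e^{πiw}`, gives `exp Φ = exp Ψ` on the upper half-plane.
There `Φ - Ψ` is continuous with values in `2πiℤ`, hence constant on this connected set. At `w = i`
both sides have the same imaginary part, because `L (conj w) = conj (L w)` (the same argument on the
slit plane, normalised by `L 1 ∈ ℝ`); so the constant is `0`.
-/

open Complex
open scoped Real ComplexConjugate

namespace Complex

lemma eq_of_exp_eq_of_im_eq {a b : ℂ} (h : exp a = exp b) (him : a.im = b.im) : a = b := by
  obtain ⟨n, hn⟩ := exp_eq_exp_iff_exists_int.mp h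
  have hn0 : (n : ℝ) * (2 * π) = 0 := by
    simpa [him] using congrArg im hn
  have hn' : n = 0 := by exact_mod_cast (mul_eq_zero.mp hn0).resolve_right (by positivity)
  simpa [hn'] using hn

theorem _root_.IsPreconnected.eqOn_of_cexp_eq {α : Type*} [TopologicalSpace α] {S : Set α}
    (hS : IsPreconnected S) {f g : α → ℂ} (hf : ContinuousOn f S) (hg : ContinuousOn g S)
    (hexp : ∀ w ∈ S, exp (f w) = exp (g w)) {w₀ : α} (hw₀ : w₀ ∈ S) (h₀ : f w₀ = g w₀) :
    Set.EqOn f g S := by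
  have hdiscrete : IsDiscrete (AddSubgroup.zmultiples (2 * π) : Set ℝ) :=
    isDiscrete_iff_discreteTopology.mpr (AddSubgroup.instDiscreteTopologyZMultiples _)
  have hmaps : Set.MapsTo (fun w => (f w - g w).im) S (AddSubgroup.zmultiples (2 * π)) := by
    intro w hw
    obtain ⟨n, hn⟩ := exp_eq_exp_iff_exists_int.mp (hexp w hw)
    exact ⟨n, by simp [hn]⟩
  intro w hw
  refine eq_of_exp_eq_of_im_eq (hexp w hw) ?_
  have := hS.constant_of_mapsTo hdiscrete (continuous_im.comp_continuousOn (hf.sub hg)) hmaps hw hw₀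
  simpa [h₀, sub_eq_zero] using this

theorem Gamma_mul_Gamma_neg {w : ℂ} (hw : ∀ n : ℤ, w ≠ n) :
    Gamma w * Gamma (-w) * w * (1 - exp (2 * π * I * w)) = 2 * π * I * exp (π * I * w) := by
  have hw0 : w ≠ 0 := by exact_mod_cast hw 0
  have hsin : sin (π * w) ≠ 0 := by
    rw [Ne, sin_eq_zero_iff]
    rintro ⟨k, hk⟩
    exact hw k (mul_left_cancel₀ (ofReal_ne_zero.mpr Real.pi_ne_zero) (by rw [hk, mul_comm]))
  have hrefl := Gamma_mul_Gamma_one_sub w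
  rw [show 1 - w = -w + 1 by ring, Gamma_add_one _ (neg_ne_zero.mpr hw0), eq_div_iff hsin] at hrefl
  have hsin' : sin (π * w) * (2 * I * exp (π * I * w)) = exp (2 * π * I * w) - 1 := by
    have h1 : exp (-(π * w) * I) * exp (π * I * w) = 1 := by rw [← exp_add]; ring_nf; simp
    have h2 : exp (π * w * I) * exp (π * I * w) = exp (2 * π * I * w) := by rw [← exp_add]; ring_nf
    rw [sin]
    linear_combination (-1 : ℂ) * h1 + h2 +
      (exp (-(π * w) * I) - exp (π * w * I)) * exp (π * I * w) * I_sq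
  linear_combination (2 * I * exp (π * I * w)) * hrefl + Gamma w * Gamma (-w) * w * hsin'

lemma one_sub_exp_two_pi_mul_I_mul_mem_slitPlane {w : ℂ} (hw : 0 < w.im) :
    1 - exp (2 * π * I * w) ∈ slitPlane := by
  rw [sub_eq_add_neg]
  refine mem_slitPlane_of_norm_lt_one ?_
  rw [norm_neg, norm_exp, Real.exp_lt_one_iff]
  simpa using mul_pos Real.two_pi_pos hw

end Complex

/-- `Ω(w)` with `ℓ` the value of `log w` in use: the second bracket of the theorem is `Ω(-w)` with
`ℓ = log w - πi`. -/
noncomputable def stirlingRemainder (L : ℂ → ℂ) (w ℓ : ℂ) : ℂ :=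
  L w - (w - 1/2) * ℓ + w - 1/2 * Real.log (2 * π)

section LogGamma

variable {L : ℂ → ℂ}

lemma map_conj_of_exp_eq_Gamma (hL : ContinuousOn L slitPlane)
    (hexp : ∀ z ∈ slitPlane, exp (L z) = Gamma z) (h1 : (L 1).im = 0) {w : ℂ}
    (hw : w ∈ slitPlane) : L (conj w) = conj (L w) := by
  have hconj : Set.MapsTo conj slitPlane slitPlane := fun z hz => by
    simpa [mem_slitPlane_iff] using hz
  have hpre : IsPreconnected slitPlane :=
    (starConvex_one_slitPlane.isPathConnected one_mem_slitPlane).isConnected.isPreconnected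
  have key : Set.EqOn (conj ∘ L ∘ conj) L slitPlane := by
    refine hpre.eqOn_of_cexp_eq ?_ hL (fun z hz => ?_) one_mem_slitPlane ?_
    · exact continuous_conj.comp_continuousOn (hL.comp continuous_conj.continuousOn hconj)
    · rw [Function.comp_apply, Function.comp_apply, exp_conj, hexp _ (hconj hz), ← Gamma_conj,
        conj_conj, hexp z hz]
    · simp [conj_eq_iff_im, h1]
  simpa using (key (hconj hw)).symm

lemma exp_stirlingRemainder_add_mul (hexp : ∀ z ∈ slitPlane, exp (L z) = Gamma z) {w : ℂ}
    (hw : w.im ≠ 0) :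
    exp (stirlingRemainder L w (log w) + stirlingRemainder L (-w) (log w - π * I)) *
      (1 - exp (2 * π * I * w)) = 1 := by
  have hw0 : w ≠ 0 := fun h => hw (by simp [h])
  have hsum : stirlingRemainder L w (log w) + stirlingRemainder L (-w) (log w - π * I) =
      L w + L (-w) + log w - π * I * w - π / 2 * I - Real.log (2 * π) := by
    simp only [stirlingRemainder]; ring
  have hrefl := Gamma_mul_Gamma_neg (w := w) fun n h => hw (by simp [h])
  rw [hsum, exp_sub, exp_sub, exp_sub, exp_add, exp_add, hexp w (.inr hw),
    hexp (-w) (.inr (by simpa using hw)), exp_log hw0, exp_pi_div_two_mul_I, ← ofReal_exp,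
    Real.exp_log (by positivity)]
  rw [div_div, div_div, div_mul_eq_mul_div, div_eq_one_iff_eq (by simp [Real.pi_ne_zero]), hrefl]
  push_cast
  ring

lemma exp_stirlingRemainder_add_eq_exp_neg_log (hexp : ∀ z ∈ slitPlane, exp (L z) = Gamma z)
    {w : ℂ} (hw : 0 < w.im) :
    exp (stirlingRemainder L w (log w) + stirlingRemainder L (-w) (log w - π * I)) =
      exp (-log (1 - exp (2 * π * I * w))) := by
  rw [exp_neg, exp_log (slitPlane_ne_zero (one_sub_exp_two_pi_mul_I_mul_mem_slitPlane hw))]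
  exact eq_inv_of_mul_eq_one_left (exp_stirlingRemainder_add_mul hexp hw.ne')

lemma stirlingRemainder_add_I (hL : ContinuousOn L slitPlane)
    (hexp : ∀ z ∈ slitPlane, exp (L z) = Gamma z) (h1 : (L 1).im = 0) :
    stirlingRemainder L I (log I) + stirlingRemainder L (-I) (log I - π * I) =
      -log (1 - exp (2 * π * I * I)) := by
  refine eq_of_exp_eq_of_im_eq (exp_stirlingRemainder_add_eq_exp_neg_log hexp (by simp)) ?_
  have hconj := map_conj_of_exp_eq_Gamma hL hexp h1 (w := I) (.inr (by simp))
  have hq : 1 - exp (2 * π * I * I) = ((1 - Real.exp (-(2 * π)) : ℝ) : ℂ) := by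
    push_cast
    ring_nf
    simp
  have hq_pos : 0 < 1 - Real.exp (-(2 * π)) := by
    simpa using Real.exp_lt_one_iff.mpr (by linarith [Real.pi_pos] : -(2 * π) < 0)
  rw [conj_I] at hconj
  rw [hq, ← ofReal_log hq_pos.le]
  simp [stirlingRemainder, hconj, log_I]
  ring

lemma continuousOn_stirlingRemainder_add (hL : ContinuousOn L slitPlane) :
    ContinuousOn (fun w => stirlingRemainder L w (log w) + stirlingRemainder L (-w) (log w - π * I))
      {w | 0 < w.im} := by
  have hslit : {w : ℂ | 0 < w.im} ⊆ slitPlane := fun w hw => .inr hw.ne'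
  have hlog : ContinuousOn log {w | 0 < w.im} := continuousOn_id.clog hslit
  have hL_id : ContinuousOn L {w | 0 < w.im} := hL.mono hslit
  have hL_neg : ContinuousOn (fun w => L (-w)) {w | 0 < w.im} :=
    hL.comp continuousOn_neg fun w hw => .inr (by simpa using hw.ne')
  simp only [stirlingRemainder]
  apply_rules [ContinuousOn.add, ContinuousOn.sub, ContinuousOn.mul, ContinuousOn.neg,
    continuousOn_const, continuousOn_id]

end LogGamma

/-- The continuation formula `Ω(z) + Ω(z e^(-iπ)) = -log(1 - e^(2πiz))` for the slowly
varying part of `log Γ`, a consequence of the reflection formula for the Gamma function. -/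
theorem omega_continuation_formula (L : ℂ → ℂ)
    (hL : DifferentiableOn ℂ L Complex.slitPlane)
    (hexp : ∀ z ∈ Complex.slitPlane, Complex.exp (L z) = Complex.Gamma z)
    (hreal : ∀ x : ℝ, 0 < x → L (x : ℂ) = (Real.log (Real.Gamma x) : ℂ))
    (z : ℂ) (hz : 0 < z.im) :
    (L z - (z - 1/2) * Complex.log z + z - (1/2) * (Real.log (2 * Real.pi) : ℂ)) +
      (L (-z) + (z + 1/2) * (Complex.log z - Real.pi * Complex.I) - z -
        (1/2) * (Real.log (2 * Real.pi) : ℂ)) =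
      -Complex.log (1 - Complex.exp (2 * Real.pi * Complex.I * z)) := by
  have hU : IsPreconnected {w : ℂ | 0 < w.im} := (convex_halfSpace_im_gt 0).isPreconnected
  have hrhs : ContinuousOn (fun w => -log (1 - exp (2 * π * I * w))) {w | 0 < w.im} :=
    ((continuous_const.sub (by fun_prop)).continuousOn.clog
      fun w hw => one_sub_exp_two_pi_mul_I_mul_mem_slitPlane hw).neg
  have h1 : (L 1).im = 0 := by simpa using congrArg im (hreal 1 one_pos)
  have key := hU.eqOn_of_cexp_eq (continuousOn_stirlingRemainder_add hL.continuousOn) hrhs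
    (fun w hw => exp_stirlingRemainder_add_eq_exp_neg_log hexp hw) (show 0 < I.im by simp)
    (stirlingRemainder_add_I hL.continuousOn hexp h1) hz
  simp only [stirlingRemainder] at key
  linear_combination key
end
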